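/- For all positive integers j, k, l and every real x with sin x ≠ 0, one has sin(j x)·sin(k x)·sin(l x)/sin²x = Σ_{m=1}^{j+k+l−2} S_{j,k,l,m} · sin(m x). -/

import Mathlib

open Real Set Finset

/-- The function 𝔪(j,k) = (1/2)·sgn(j)·sgn(k)·min(|j|,|k|). -/
noncomputable def frakm (j k : ℤ) : ℝ :=
  (1 / 2 : ℝ) * (j.sign : ℝ) * (k.sign : ℝ) * ((min |j| |k| : ℤ) : ℝ)

/-- The interaction coefficient S_{j,k,l,m}. -/
noncomputable def Scoef (j k l m : ℤ) : ℝ :=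
  if Even (j + k + l + m) then
    frakm (j + k - l) m + frakm (j - k + l) m + frakm (-j + k + l) m - frakm (j + k + l) m
  else 0

/-!
Multiplying a finite sine series `∑ cₘ sin(m x)` with `c₀ = 0` by `2 cos x` replaces `cₘ` by
`cₘ₊₁ + cₘ₋₁`, and `sin((l+2)x) = 2 cos x · sin((l+1)x) - sin(l x)`. Since `2𝔪(n, m)` is `n` clamped to `[-m, m]`,
the coefficients satisfy the matching recurrence
`S_{j,k,l+2,m} + S_{j,k,l,m} = S_{j,k,l+1,m+1} + S_{j,k,l+1,m-1}`, and they vanish for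
`m ≥ j+k+l-1`. The identity therefore propagates in `l` from `l = 0` (both sides vanish) and
`l = 1`. By the symmetry `S_{j,k,1,m} = S_{j,1,k,m}` the case `l = 1` is the case `k = 1`,
obtained by the same induction from `S_{j,1,1,m} = δ_{jm}`.
-/

def symmClamp (m n : ℤ) : ℤ := max (-m) (min n m)

/-- Twice `Scoef` for `m ≥ 0`, in a form `omega` can decide. -/
def scoefInt (j k l m : ℤ) : ℤ :=
  if (j + k + l + m) % 2 = 0 then
    symmClamp m (j + k - l) + symmClamp m (j - k + l) + symmClamp m (-j + k + l)
      - symmClamp m (j + k + l)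
  else 0

lemma sign_mul_sign_mul_min_abs (n : ℤ) {m : ℤ} (hm : 0 ≤ m) :
    n.sign * m.sign * min |n| |m| = symmClamp m n := by
  rcases hm.lt_or_eq with hm | rfl
  · rw [Int.sign_eq_one_of_pos hm, abs_of_pos hm, symmClamp]
    rcases lt_trichotomy n 0 with hn | rfl | hn
    · rw [Int.sign_eq_neg_one_of_neg hn, abs_of_neg hn]; omega
    · simp; omega
    · rw [Int.sign_eq_one_of_pos hn, abs_of_pos hn]; omega
  · simp [symmClamp]

lemma frakm_eq_symmClamp (n : ℤ) {m : ℤ} (hm : 0 ≤ m) : frakm n m = symmClamp m n / 2 := by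
  rw [← sign_mul_sign_mul_min_abs n hm, frakm]
  push_cast
  ring

lemma Scoef_eq_scoefInt (j k l : ℤ) {m : ℤ} (hm : 0 ≤ m) :
    Scoef j k l m = scoefInt j k l m / 2 := by
  simp only [Scoef, scoefInt, Int.even_iff, frakm_eq_symmClamp _ hm]
  split_ifs <;> push_cast <;> ring

lemma symmClamp_add_two_add_symmClamp (n : ℤ) {m : ℤ} (hm : 1 ≤ m) :
    symmClamp m (n + 2) + symmClamp m n
      = symmClamp (m + 1) (n + 1) + symmClamp (m - 1) (n + 1) := by
  unfold symmClamp
  omega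

lemma scoefInt_l_add_two (j k l : ℤ) {m : ℤ} (hm : 1 ≤ m) :
    scoefInt j k (l + 2) m + scoefInt j k l m
      = scoefInt j k (l + 1) (m + 1) + scoefInt j k (l + 1) (m - 1) := by
  have h₁ := symmClamp_add_two_add_symmClamp (j + k - (l + 2)) hm
  have h₂ := symmClamp_add_two_add_symmClamp (j - k + l) hm
  have h₃ := symmClamp_add_two_add_symmClamp (-j + k + l) hm
  have h₄ := symmClamp_add_two_add_symmClamp (j + k + l) hm
  unfold scoefInt
  ring_nf at h₁ h₂ h₃ h₄ ⊢
  split_ifs <;> omega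

lemma Scoef_l_add_two (j k l : ℤ) {m : ℤ} (hm : 1 ≤ m) :
    Scoef j k (l + 2) m + Scoef j k l m
      = Scoef j k (l + 1) (m + 1) + Scoef j k (l + 1) (m - 1) := by
  have h : ((scoefInt j k (l + 2) m + scoefInt j k l m : ℤ) : ℝ)
      = ((scoefInt j k (l + 1) (m + 1) + scoefInt j k (l + 1) (m - 1) : ℤ) : ℝ) := by
    rw [scoefInt_l_add_two j k l hm]
  rw [Scoef_eq_scoefInt _ _ _ (by omega), Scoef_eq_scoefInt _ _ _ (by omega),
    Scoef_eq_scoefInt _ _ _ (by omega), Scoef_eq_scoefInt _ _ _ (by omega)]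
  push_cast at h
  linarith

lemma Scoef_l_zero (j k : ℤ) {m : ℤ} (hm : 0 ≤ m) : Scoef j k 0 m = 0 := by
  rw [Scoef_eq_scoefInt _ _ _ hm, div_eq_zero_iff, Int.cast_eq_zero]
  left
  unfold scoefInt symmClamp
  split_ifs <;> omega

lemma Scoef_one_one (j : ℤ) {m : ℤ} (hj : 0 ≤ j) (hm : 1 ≤ m) :
    Scoef j 1 1 m = if m = j then 1 else 0 := by
  rw [Scoef_eq_scoefInt _ _ _ (by omega)]
  have : scoefInt j 1 1 m = if m = j then 2 else 0 := by
    unfold scoefInt symmClamp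
    split_ifs <;> omega
  rw [this]
  split_ifs <;> norm_num

lemma Scoef_m_zero (j k l : ℤ) : Scoef j k l 0 = 0 := by
  rw [Scoef_eq_scoefInt _ _ _ le_rfl, div_eq_zero_iff, Int.cast_eq_zero]
  left
  unfold scoefInt symmClamp
  split_ifs <;> omega

lemma Scoef_eq_zero_of_le (j k l : ℤ) {m : ℤ} (hj : 0 ≤ j) (hk : 0 ≤ k) (hl : 0 ≤ l)
    (hm₀ : 0 ≤ m) (hm : j + k + l ≤ m + 1) : Scoef j k l m = 0 := by
  rw [Scoef_eq_scoefInt _ _ _ hm₀, div_eq_zero_iff, Int.cast_eq_zero]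
  left
  unfold scoefInt symmClamp
  split_ifs <;> omega

lemma Scoef_comm_kl (j k l m : ℤ) : Scoef j k l m = Scoef j l k m := by
  unfold Scoef
  rw [add_right_comm j k l, sub_add_eq_add_sub, add_sub_right_comm j k l, add_right_comm (-j) k l]
  split_ifs <;> ring

lemma sin_add_one_mul_add_sin_sub_one_mul (t x : ℝ) :
    sin ((t + 1) * x) + sin ((t - 1) * x) = 2 * cos x * sin (t * x) := by
  rw [add_mul, sub_mul, one_mul, sin_add, sin_sub]
  ring

lemma two_mul_cos_mul_sum_sin (x : ℝ) (c : ℕ → ℝ) {N R : ℕ} (hc₀ : c 0 = 0)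
    (hc : ∀ m, N ≤ m → c m = 0) (hR : N < R) :
    2 * cos x * ∑ m ∈ range R, c m * sin (m * x)
      = ∑ m ∈ range R, (c (m + 1) + c (m - 1)) * sin (m * x) := by
  obtain ⟨R, rfl⟩ : ∃ R', R = R' + 1 := ⟨R - 1, by omega⟩
  have up : ∑ m ∈ range (R + 1), c m * sin ((m + 1) * x)
      = ∑ m ∈ range (R + 1), c (m - 1) * sin (m * x) := by
    rw [sum_range_succ, hc R (by omega), sum_range_succ']
    simp
  have down : ∑ m ∈ range (R + 1), c m * sin ((m - 1) * x)
      = ∑ m ∈ range (R + 1), c (m + 1) * sin (m * x) := by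
    rw [sum_range_succ', hc₀, sum_range_succ _ R, hc (R + 1) (by omega)]
    simp
  simp_rw [mul_sum, add_mul]
  rw [sum_add_distrib, ← up, ← down, ← sum_add_distrib]
  refine sum_congr rfl fun m _ => ?_
  rw [mul_left_comm, ← sin_add_one_mul_add_sin_sub_one_mul]
  ring

def ModeExpansion (x : ℝ) (j k l : ℕ) : Prop :=
  ∀ R, j + k + l ≤ R → sin (j * x) * sin (k * x) * sin (l * x) / sin x ^ 2
    = ∑ m ∈ range R, Scoef j k l m * sin (m * x)

section

variable {x : ℝ}

lemma modeExpansion_zero (j k : ℕ) : ModeExpansion x j k 0 := by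
  intro R _
  simp only [Nat.cast_zero, zero_mul, sin_zero, mul_zero, zero_div]
  exact (sum_eq_zero fun m _ => by rw [Scoef_l_zero _ _ (by positivity), zero_mul]).symm

lemma modeExpansion_one_one (hx : sin x ≠ 0) (j : ℕ) : ModeExpansion x j 1 1 := by
  intro R hR
  have hdelta : ∀ m ∈ range R, Scoef j (1 : ℕ) (1 : ℕ) m * sin (m * x)
      = if j = m then sin (m * x) else 0 := by
    intro m _
    rcases Nat.eq_zero_or_pos m with rfl | hm
    · simp
    · rw [Nat.cast_one, Scoef_one_one _ (by positivity) (by exact_mod_cast hm)]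
      split_ifs <;> simp_all [eq_comm]
  rw [sum_congr rfl hdelta, sum_ite_eq, if_pos (Finset.mem_range.2 (by omega)), Nat.cast_one,
    one_mul, mul_assoc, ← sq, mul_div_assoc, div_self (pow_ne_zero 2 hx), mul_one]

lemma ModeExpansion.comm_kl {j k l : ℕ} (h : ModeExpansion x j k l) :
    ModeExpansion x j l k := by
  intro R hR
  rw [mul_right_comm, h R (by omega)]
  exact sum_congr rfl fun m _ => by rw [Scoef_comm_kl]

lemma ModeExpansion.add_two {j k l : ℕ} (h₀ : ModeExpansion x j k l)
    (h₁ : ModeExpansion x j k (l + 1)) : ModeExpansion x j k (l + 2) := by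
  intro R hR
  have hsin : sin (((l + 2 : ℕ) : ℝ) * x)
      = 2 * cos x * sin (((l + 1 : ℕ) : ℝ) * x) - sin (l * x) := by
    rw [← sin_add_one_mul_add_sin_sub_one_mul]
    push_cast
    ring_nf
  calc sin (j * x) * sin (k * x) * sin (((l + 2 : ℕ) : ℝ) * x) / sin x ^ 2
      = 2 * cos x * (sin (j * x) * sin (k * x) * sin (((l + 1 : ℕ) : ℝ) * x) / sin x ^ 2)
          - sin (j * x) * sin (k * x) * sin (l * x) / sin x ^ 2 := by
        rw [hsin]; ring
    _ = 2 * cos x * ∑ m ∈ range R, Scoef j k (l + 1 : ℕ) m * sin (m * x)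
          - ∑ m ∈ range R, Scoef j k l m * sin (m * x) := by
        rw [h₁ R (by omega), h₀ R (by omega)]
    _ = ∑ m ∈ range R, (Scoef j k (l + 1 : ℕ) (m + 1 : ℕ) + Scoef j k (l + 1 : ℕ) (m - 1 : ℕ)
          - Scoef j k l m) * sin (m * x) := by
        rw [two_mul_cos_mul_sum_sin x _ (N := j + k + l) (by simpa using Scoef_m_zero _ _ _) _
          (by omega), ← sum_sub_distrib]
        · exact sum_congr rfl fun m _ => by ring
        · intro m hm
          exact Scoef_eq_zero_of_le _ _ _ (by positivity) (by positivity) (by positivity)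
            (by positivity) (by push_cast; omega)
    _ = ∑ m ∈ range R, Scoef j k (l + 2 : ℕ) m * sin (m * x) := by
        refine sum_congr rfl fun m _ => ?_
        rcases Nat.eq_zero_or_pos m with rfl | hm
        · simp
        · have := Scoef_l_add_two j k l (m := m) (by exact_mod_cast hm)
          rw [Nat.cast_sub hm]
          push_cast at this ⊢
          rw [← this]
          ring

theorem modeExpansion (hx : sin x ≠ 0) (j k l : ℕ) : ModeExpansion x j k l := by
  have h₁ : ∀ l, ModeExpansion x j 1 l :=
    Nat.twoStepInduction (modeExpansion_zero j 1) (modeExpansion_one_one hx j)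
      fun _ h₀ h₁ => h₀.add_two h₁
  exact Nat.twoStepInduction (modeExpansion_zero j k) (h₁ k).comm_kl
    (fun _ h₀ h₁ => h₀.add_two h₁) l

end

theorem interaction_decomposition (j k l : ℕ)
    (x : ℝ) (hx : Real.sin x ≠ 0) :
    Real.sin (j * x) * Real.sin (k * x) * Real.sin (l * x) / (Real.sin x) ^ 2
      = ∑ m ∈ Finset.Icc 1 (j + k + l - 2), Scoef j k l m * Real.sin (m * x) := by
  rw [modeExpansion hx j k l (j + k + l) le_rfl, eq_comm]
  refine sum_subset (fun m hm => by simp at hm ⊢; omega) fun m _ hm => ?_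
  rcases Nat.eq_zero_or_pos m with rfl | hm₀
  · simp
  · simp only [Finset.mem_Icc, not_and, not_le] at hm
    rw [Scoef_eq_zero_of_le _ _ _ (by positivity) (by positivity) (by positivity) (by positivity)
      (by omega), zero_mul]
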